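/- Let two admissible embeddings be given: integers q₁, q₂ ≥ −1 and nonnegative families {A^{(1)}_{ℓ,i}} (ℓ = −1,…,q₁) and {A^{(2)}_{ℓ,i}} (ℓ = −1,…,q₂), each satisfying the compatibility condition A_i = Σ_ℓ A^{(h)}_{ℓ, i−ℓ} for all i ≥ −1. Define F^{(h)} = Σ_{ℓ=0}^{q_h} A^{(h)}_ℓ(G) Σ_{j=0}^ℓ G^j, M^{(h)} = I − F^{(h)} and N^{(h)} = Σ_{ℓ=−1}^{q_h} Σ_{i=1}^∞ A^{(h)}_{ℓ,i} Σ_{j=0}^{i−1} G^j, for h = 1, 2. Assume ρ(V) < 1. If F^{(1)} ≥ F^{(2)} entrywise, then M^{(1)} and M^{(2)} are invertible and ρ((M^{(1)})⁻¹ N^{(1)}) ≤ ρ((M^{(2)})⁻¹ N^{(2)}); that is, the first fixed point iteration converges at least as fast as the second. -/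

import Mathlib

/-!
Each embedding splits `V` as `V = F + N` (a rearrangement of the double series defining `V`), so
the claim compares the two regular splittings `I - V = (I - F) - N`. For a nonnegative matrix `B`,
`ρ(B) < 1` iff `I - B` has a nonnegative left inverse, and Gelfand's formula makes `ρ` monotone on
nonnegative matrices. For `t > 0` one has `(I - F)(I - t⁻¹ (I - F)⁻¹ N) = I - (t⁻¹ N + F)`, hence
`ρ((I - F)⁻¹ N) < t` iff `ρ(t⁻¹ N + F) < 1`. For `t < 1` the matrix
`t⁻¹ N + F = t⁻¹ V - (t⁻¹ - 1) F` decreases as `F` increases, so `ρ < t` passes from the second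
splitting to the first.
-/

open Matrix

/-- Entrywise order on square real matrices. -/
def Mle {m : ℕ} (X Y : Matrix (Fin m) (Fin m) ℝ) : Prop := ∀ i j, X i j ≤ Y i j

/-- `G` is the minimal nonnegative solution of `X = ∑_{i=0}^∞ A_{i-1} Xⁱ`. -/
def IsMinSol {m : ℕ} (A : ℕ → Matrix (Fin m) (Fin m) ℝ)
    (G : Matrix (Fin m) (Fin m) ℝ) : Prop :=
  Mle 0 G ∧ Summable (fun i => A i * G ^ i) ∧ G = ∑' i, A i * G ^ i ∧
    ∀ Y, Mle 0 Y → Summable (fun i => A i * Y ^ i) → Y = ∑' i, A i * Y ^ i → Mle G Y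

/-- Spectral radius of a real matrix (over `ℂ`). -/
noncomputable def specRad {m : ℕ} (B : Matrix (Fin m) (Fin m) ℝ) : ENNReal :=
  spectralRadius ℂ (B.map (algebraMap ℝ ℂ))

/-- `F = ∑_{ℓ=0}^q A_ℓ(G) ∑_{j=0}^ℓ G^j` (shifted index `ℓ' = ℓ+1 ∈ {0,…,p}`). -/
noncomputable def Fmat {m : ℕ} (p : ℕ) (Aℓ : ℕ → ℕ → Matrix (Fin m) (Fin m) ℝ)
    (G : Matrix (Fin m) (Fin m) ℝ) : Matrix (Fin m) (Fin m) ℝ :=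
  ∑ ℓ ∈ Finset.range (p + 1), (∑' i, Aℓ ℓ i * G ^ i) * ∑ j ∈ Finset.range ℓ, G ^ j

/-- `N = ∑_{ℓ=-1}^q ∑_{i=1}^∞ A_{ℓ,i} ∑_{j=0}^{i-1} G^j`. -/
noncomputable def Nmat {m : ℕ} (p : ℕ) (Aℓ : ℕ → ℕ → Matrix (Fin m) (Fin m) ℝ)
    (G : Matrix (Fin m) (Fin m) ℝ) : Matrix (Fin m) (Fin m) ℝ :=
  ∑ ℓ ∈ Finset.range (p + 1), ∑' i, Aℓ ℓ (i + 1) * ∑ j ∈ Finset.range (i + 1), G ^ j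

/-- `V = ∑_{j=0}^∞ A_j^*`. -/
noncomputable def Vmat {m : ℕ} (A : ℕ → Matrix (Fin m) (Fin m) ℝ)
    (G : Matrix (Fin m) (Fin m) ℝ) : Matrix (Fin m) (Fin m) ℝ :=
  ∑' j : ℕ, ∑' k : ℕ, A (j + k + 1) * G ^ k

open Filter Topology
open scoped ENNReal

lemma Matrix.tsum_apply_apply {m : ℕ} {ι : Type*} {f : ι → Matrix (Fin m) (Fin m) ℝ}
    (hf : Summable f) (i j : Fin m) : (∑' k, f k) i j = ∑' k, f k i j := by
  have h := congrFun (tsum_apply (f := fun k => (f k : Fin m → Fin m → ℝ)) (x := i) hf) j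
  rwa [tsum_apply (Pi.summable.mp hf i)] at h

namespace Mle

variable {m : ℕ} {X Y Z : Matrix (Fin m) (Fin m) ℝ}

lemma trans (h₁ : Mle X Y) (h₂ : Mle Y Z) : Mle X Z :=
  fun i j => (h₁ i j).trans (h₂ i j)

lemma zero_le_one : Mle (0 : Matrix (Fin m) (Fin m) ℝ) 1 := by
  intro i j
  rw [Matrix.zero_apply, Matrix.one_apply]
  split_ifs <;> norm_num

lemma add_nonneg (hX : Mle 0 X) (hY : Mle 0 Y) : Mle 0 (X + Y) :=
  fun i j => by simpa using _root_.add_nonneg (hX i j) (hY i j)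

lemma le_add_of_nonneg_right (hY : Mle 0 Y) : Mle X (X + Y) :=
  fun i j => _root_.le_add_of_nonneg_right (hY i j)

lemma mul_nonneg (hX : Mle 0 X) (hY : Mle 0 Y) : Mle 0 (X * Y) := fun i j => by
  rw [Matrix.mul_apply]
  exact Finset.sum_nonneg fun k _ => _root_.mul_nonneg (hX i k) (hY k j)

lemma mul_le_mul_of_nonneg_right (h : Mle X Y) (hZ : Mle 0 Z) : Mle (X * Z) (Y * Z) :=
  fun i j => by
  rw [Matrix.mul_apply, Matrix.mul_apply]
  exact Finset.sum_le_sum fun k _ => _root_.mul_le_mul_of_nonneg_right (h i k) (hZ k j)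

lemma mul_le_mul_of_nonneg_left (h : Mle X Y) (hZ : Mle 0 Z) : Mle (Z * X) (Z * Y) :=
  fun i j => by
  rw [Matrix.mul_apply, Matrix.mul_apply]
  exact Finset.sum_le_sum fun k _ => _root_.mul_le_mul_of_nonneg_left (h k j) (hZ i k)

lemma pow_nonneg (hX : Mle 0 X) (n : ℕ) : Mle 0 (X ^ n) := by
  induction n with
  | zero => simpa using zero_le_one
  | succ n ih => rw [pow_succ]; exact ih.mul_nonneg hX

lemma pow_le_pow_left (hX : Mle 0 X) (h : Mle X Y) (n : ℕ) : Mle (X ^ n) (Y ^ n) := by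
  induction n with
  | zero => exact fun i j => le_rfl
  | succ n ih =>
    rw [pow_succ, pow_succ]
    exact (ih.mul_le_mul_of_nonneg_right hX).trans
      (h.mul_le_mul_of_nonneg_left ((pow_nonneg hX n).trans ih))

lemma smul_nonneg {c : ℝ} (hc : 0 ≤ c) (hX : Mle 0 X) : Mle 0 (c • X) :=
  fun i j => _root_.mul_nonneg hc (hX i j)

lemma sum_nonneg {ι : Type*} {s : Finset ι} {f : ι → Matrix (Fin m) (Fin m) ℝ}
    (h : ∀ k ∈ s, Mle 0 (f k)) : Mle 0 (∑ k ∈ s, f k) := fun i j => by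
  rw [Matrix.sum_apply]
  exact Finset.sum_nonneg fun k hk => h k hk i j

lemma tsum_nonneg {ι : Type*} {f : ι → Matrix (Fin m) (Fin m) ℝ} (h : ∀ k, Mle 0 (f k)) :
    Mle 0 (∑' k, f k) := by
  by_cases hf : Summable f
  · intro i j
    rw [Matrix.tsum_apply_apply hf]
    exact _root_.tsum_nonneg fun k => h k i j
  · rw [tsum_eq_zero_of_not_summable hf]
    exact fun i j => le_rfl

end Mle

section SpectralRadius

attribute [local instance] Matrix.linftyOpNormedRing Matrix.linftyOpNormedAlgebra

variable {m : ℕ}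

lemma nnnorm_map_ofReal (X : Matrix (Fin m) (Fin m) ℝ) :
    ‖X.map (algebraMap ℝ ℂ)‖₊ = ‖X‖₊ := by
  simp [Matrix.linfty_opNNNorm_def, Complex.nnnorm_real]

lemma map_ofReal_pow (X : Matrix (Fin m) (Fin m) ℝ) (n : ℕ) :
    (X ^ n).map (algebraMap ℝ ℂ) = X.map (algebraMap ℝ ℂ) ^ n :=
  map_pow (algebraMap ℝ ℂ).mapMatrix X n

lemma tendsto_nnnorm_pow_specRad (B : Matrix (Fin m) (Fin m) ℝ) :
    Tendsto (fun n : ℕ => (‖B ^ n‖₊ : ℝ≥0∞) ^ (1 / n : ℝ)) atTop (𝓝 (specRad B)) := by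
  simp only [← nnnorm_map_ofReal (B ^ _), map_ofReal_pow]
  exact spectrum.pow_nnnorm_pow_one_div_tendsto_nhds_spectralRadius _

lemma specRad_le_nnnorm_pow (B : Matrix (Fin m) (Fin m) ℝ) (n : ℕ) :
    specRad B ≤ (‖B ^ (n + 1)‖₊ : ℝ≥0∞) ^ (1 / (n + 1) : ℝ) := by
  have hone : ‖(1 : Matrix (Fin m) (Fin m) ℂ)‖₊ ≤ 1 := by
    rw [← Matrix.diagonal_one, Matrix.linfty_opNNNorm_diagonal]
    exact (pi_nnnorm_const_le _).trans nnnorm_one.le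
  calc specRad B ≤ (‖B ^ (n + 1)‖₊ : ℝ≥0∞) ^ (1 / (n + 1) : ℝ) *
        (‖(1 : Matrix (Fin m) (Fin m) ℂ)‖₊ : ℝ≥0∞) ^ (1 / (n + 1) : ℝ) := by
        rw [← nnnorm_map_ofReal, map_ofReal_pow]
        exact spectrum.spectralRadius_le_pow_nnnorm_pow_one_div ℂ _ n
    _ ≤ (‖B ^ (n + 1)‖₊ : ℝ≥0∞) ^ (1 / (n + 1) : ℝ) := by
        exact mul_le_of_le_one_right' (ENNReal.rpow_le_one (by exact_mod_cast hone) (by positivity))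

lemma summable_pow_of_specRad_lt_one {B : Matrix (Fin m) (Fin m) ℝ} (h : specRad B < 1) :
    Summable (B ^ ·) := by
  obtain ⟨r, hBr, hr1⟩ := ENNReal.lt_iff_exists_nnreal_btwn.mp h
  have hr1' : (r : ℝ) < 1 := by exact_mod_cast hr1
  refine Summable.of_norm_bounded_eventually_nat
    (summable_geometric_of_lt_one r.coe_nonneg hr1') ?_
  filter_upwards [(tendsto_nnnorm_pow_specRad B).eventually_lt_const hBr,
    eventually_ne_atTop 0] with n hn hn0
  rw [one_div] at hn
  have : (‖B ^ n‖₊ : ℝ≥0∞) < (r : ℝ≥0∞) ^ n := by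
    simpa [ENNReal.rpow_inv_natCast_pow hn0] using (ENNReal.pow_lt_pow_left_iff hn0).mpr hn
  exact_mod_cast this.le

lemma specRad_lt_one_of_summable_pow {B : Matrix (Fin m) (Fin m) ℝ} (h : Summable (B ^ ·)) :
    specRad B < 1 := by
  have hlim := (continuous_nnnorm.tendsto _).comp h.tendsto_atTop_zero
  rw [nnnorm_zero] at hlim
  obtain ⟨N, hN⟩ := eventually_atTop.mp (hlim.eventually_lt_const one_pos)
  exact (specRad_le_nnnorm_pow B N).trans_lt
    (ENNReal.rpow_lt_one (by exact_mod_cast hN (N + 1) N.le_succ) (by positivity))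

lemma nnnorm_le_nnnorm_of_nonneg {X Y : Matrix (Fin m) (Fin m) ℝ} (hX : Mle 0 X)
    (h : Mle X Y) : ‖X‖₊ ≤ ‖Y‖₊ := by
  rw [Matrix.linfty_opNNNorm_def, Matrix.linfty_opNNNorm_def]
  refine Finset.sup_mono_fun fun i _ => Finset.sum_le_sum fun j _ => ?_
  rw [← NNReal.coe_le_coe, coe_nnnorm, coe_nnnorm, Real.norm_of_nonneg (hX i j),
    Real.norm_of_nonneg ((hX i j).trans (h i j))]
  exact h i j

lemma specRad_mono {B C : Matrix (Fin m) (Fin m) ℝ} (hB : Mle 0 B) (h : Mle B C) :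
    specRad B ≤ specRad C :=
  le_of_tendsto_of_tendsto' (tendsto_nnnorm_pow_specRad B) (tendsto_nnnorm_pow_specRad C)
    fun n => ENNReal.rpow_le_rpow (ENNReal.coe_le_coe.mpr <| nnnorm_le_nnnorm_of_nonneg
      (hB.pow_nonneg n) (hB.pow_le_pow_left h n)) (by positivity)

lemma specRad_smul (c : ℝ) (B : Matrix (Fin m) (Fin m) ℝ) :
    specRad (c • B) = ‖c‖₊ * specRad B := by
  refine tendsto_nhds_unique (tendsto_nnnorm_pow_specRad (c • B)) ?_
  refine (ENNReal.Tendsto.const_mul (tendsto_nnnorm_pow_specRad B)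
    (Or.inr ENNReal.coe_ne_top)).congr' ?_
  filter_upwards [eventually_ne_atTop 0] with n hn
  rw [smul_pow, nnnorm_smul, nnnorm_pow c n, ENNReal.coe_mul, one_div,
    ENNReal.mul_rpow_of_nonneg _ _ (by positivity), ENNReal.coe_pow,
    ENNReal.pow_rpow_inv_natCast hn]

end SpectralRadius

section Neumann

variable {m : ℕ}

lemma Matrix.summable_of_sum_range_le {f : ℕ → Matrix (Fin m) (Fin m) ℝ}
    {S : Matrix (Fin m) (Fin m) ℝ} (hf : ∀ k, Mle 0 (f k))
    (h : ∀ n, Mle (∑ k ∈ Finset.range n, f k) S) : Summable f :=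
  Pi.summable.mpr fun i => Pi.summable.mpr fun j =>
    _root_.summable_of_sum_range_le (fun k => hf k i j) fun n => by
      simpa only [Matrix.sum_apply] using h n i j

lemma sum_range_pow_le {B S : Matrix (Fin m) (Fin m) ℝ} (hB : Mle 0 B) (hS : Mle 0 S)
    (hSB : S * (1 - B) = 1) (n : ℕ) : Mle (∑ k ∈ Finset.range n, B ^ k) S := by
  induction n with
  | zero => simpa using hS
  | succ n ih =>
    have hS' : S = 1 + S * B := by rw [← hSB]; noncomm_ring
    simp_rw [Finset.sum_range_succ', pow_succ, ← Finset.sum_mul, pow_zero]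
    rw [add_comm, hS']
    intro i j
    simpa [Matrix.add_apply] using (ih.mul_le_mul_of_nonneg_right hB) i j

lemma specRad_lt_one_iff_exists_nonneg_inv {B : Matrix (Fin m) (Fin m) ℝ} (hB : Mle 0 B) :
    specRad B < 1 ↔ ∃ S, Mle 0 S ∧ S * (1 - B) = 1 := by
  refine ⟨fun h => ⟨∑' k, B ^ k, Mle.tsum_nonneg hB.pow_nonneg,
    (summable_pow_of_specRad_lt_one h).tsum_pow_mul_one_sub⟩, ?_⟩
  rintro ⟨S, hS, hSB⟩
  exact specRad_lt_one_of_summable_pow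
    (Matrix.summable_of_sum_range_le hB.pow_nonneg (sum_range_pow_le hB hS hSB))

lemma isUnit_one_sub_of_specRad_lt_one {B : Matrix (Fin m) (Fin m) ℝ} (h : specRad B < 1) :
    IsUnit (1 - B) :=
  have hs := summable_pow_of_specRad_lt_one h
  ⟨⟨1 - B, ∑' k, B ^ k, hs.one_sub_mul_tsum_pow, hs.tsum_pow_mul_one_sub⟩, rfl⟩

lemma inv_one_sub_nonneg {B : Matrix (Fin m) (Fin m) ℝ} (hB : Mle 0 B) (h : specRad B < 1) :
    Mle 0 (1 - B)⁻¹ := by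
  rw [Matrix.inv_eq_right_inv (summable_pow_of_specRad_lt_one h).one_sub_mul_tsum_pow]
  exact Mle.tsum_nonneg hB.pow_nonneg

lemma specRad_inv_smul_lt_one_iff (B : Matrix (Fin m) (Fin m) ℝ) {t : ℝ} (ht : 0 < t) :
    specRad (t⁻¹ • B) < 1 ↔ specRad B < ENNReal.ofReal t := by
  have hnorm : (‖t⁻¹‖₊ : ℝ≥0∞) = (ENNReal.ofReal t)⁻¹ := by
    rw [← ENNReal.ofReal_inv_of_pos ht, ← Real.enorm_eq_ofReal (by positivity)]
    rfl
  rw [specRad_smul, hnorm, mul_comm, ← div_eq_mul_inv,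
    ENNReal.div_lt_iff (Or.inl (ENNReal.ofReal_pos.mpr ht).ne') (Or.inl ENNReal.ofReal_ne_top),
    one_mul]

end Neumann

section RegularSplitting

variable {m : ℕ}

lemma specRad_inv_mul_lt_iff {F N : Matrix (Fin m) (Fin m) ℝ} (hF : Mle 0 F) (hN : Mle 0 N)
    (hρF : specRad F < 1) {t : ℝ} (ht : 0 < t) :
    specRad ((1 - F)⁻¹ * N) < ENNReal.ofReal t ↔ specRad (t⁻¹ • N + F) < 1 := by
  set E := (1 - F)⁻¹
  have hdet := (Matrix.isUnit_iff_isUnit_det _).mp (isUnit_one_sub_of_specRad_lt_one hρF)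
  have hFE : (1 - F) * E = 1 := Matrix.mul_nonsing_inv _ hdet
  have hEF : E * (1 - F) = 1 := Matrix.nonsing_inv_mul _ hdet
  have hE : Mle 0 E := inv_one_sub_nonneg hF hρF
  have ht' : 0 ≤ t⁻¹ := inv_nonneg.mpr ht.le
  have htN : Mle 0 (t⁻¹ • N) := Mle.smul_nonneg ht' hN
  have key : (1 - F) * (1 - t⁻¹ • (E * N)) = 1 - (t⁻¹ • N + F) := by
    rw [mul_sub, mul_one, mul_smul_comm, ← mul_assoc, hFE, one_mul]
    abel
  rw [← specRad_inv_smul_lt_one_iff _ ht,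
    specRad_lt_one_iff_exists_nonneg_inv (Mle.smul_nonneg ht' (hE.mul_nonneg hN)),
    specRad_lt_one_iff_exists_nonneg_inv (htN.add_nonneg hF)]
  constructor
  · rintro ⟨U, hU, hUB⟩
    refine ⟨U * E, hU.mul_nonneg hE, ?_⟩
    rw [← key, mul_assoc, ← mul_assoc E, hEF, one_mul, hUB]
  · rintro ⟨Q, hQ, hQC⟩
    have hQF : Q * (1 - F) = 1 + Q * (t⁻¹ • N) := calc
      Q * (1 - F) = Q * (1 - (t⁻¹ • N + F)) + Q * (t⁻¹ • N) := by rw [← mul_add]; congr 1; abel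
      _ = 1 + Q * (t⁻¹ • N) := by rw [hQC]
    refine ⟨Q * (1 - F), ?_, by rw [mul_assoc, key, hQC]⟩
    rw [hQF]
    exact Mle.zero_le_one.add_nonneg (hQ.mul_nonneg htN)

theorem specRad_inv_mul_le_of_splitting {V F₁ N₁ F₂ N₂ : Matrix (Fin m) (Fin m) ℝ}
    (hF₁ : Mle 0 F₁) (hN₁ : Mle 0 N₁) (hF₂ : Mle 0 F₂) (hN₂ : Mle 0 N₂)
    (h₁ : F₁ + N₁ = V) (h₂ : F₂ + N₂ = V) (hF : Mle F₂ F₁) (hV : specRad V < 1) :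
    IsUnit (1 - F₁) ∧ IsUnit (1 - F₂) ∧
      specRad ((1 - F₁)⁻¹ * N₁) ≤ specRad ((1 - F₂)⁻¹ * N₂) := by
  have hρ₁ : specRad F₁ < 1 := (specRad_mono hF₁ (h₁ ▸ Mle.le_add_of_nonneg_right hN₁)).trans_lt hV
  have hρ₂ : specRad F₂ < 1 := (specRad_mono hF₂ (h₂ ▸ Mle.le_add_of_nonneg_right hN₂)).trans_lt hV
  refine ⟨isUnit_one_sub_of_specRad_lt_one hρ₁, isUnit_one_sub_of_specRad_lt_one hρ₂, ?_⟩
  have hH₂ : specRad ((1 - F₂)⁻¹ * N₂) < 1 := by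
    rw [← ENNReal.ofReal_one, specRad_inv_mul_lt_iff hF₂ hN₂ hρ₂ one_pos, inv_one, one_smul,
      add_comm, h₂]
    exact hV
  have hC : ∀ t : ℝ, 0 < t → t < 1 → Mle (t⁻¹ • N₁ + F₁) (t⁻¹ • N₂ + F₂) := by
    intro t ht ht1 i j
    have e₁ := congrFun (congrFun h₁ i) j
    have e₂ := congrFun (congrFun h₂ i) j
    have hf := hF i j
    have hti : 1 ≤ t⁻¹ := one_le_inv₀ ht |>.mpr ht1.le
    simp only [Matrix.add_apply, Matrix.smul_apply, smul_eq_mul] at e₁ e₂ ⊢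
    nlinarith
  refine le_of_forall_gt_imp_ge_of_dense fun c hc => ?_
  obtain ⟨t, -, hHt, htc⟩ := ENNReal.lt_iff_exists_real_btwn.mp (lt_min hc hH₂)
  have ht : 0 < t := ENNReal.ofReal_pos.mp (pos_of_gt hHt)
  have ht1 : t < 1 := ENNReal.ofReal_lt_one.mp (htc.trans_le (min_le_right _ _))
  rw [specRad_inv_mul_lt_iff hF₂ hN₂ hρ₂ ht] at hHt
  have h₁t := (specRad_mono (Mle.smul_nonneg (inv_nonneg.mpr ht.le) hN₁ |>.add_nonneg hF₁)
    (hC t ht ht1)).trans_lt hHt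
  rw [← specRad_inv_mul_lt_iff hF₁ hN₁ hρ₁ ht] at h₁t
  exact (h₁t.trans (htc.trans_le (min_le_left _ _))).le

end RegularSplitting

section Embedding

variable {m : ℕ}

open Finset

lemma Matrix.summable_of_nonneg_of_le {ι : Type*} {f g : ι → Matrix (Fin m) (Fin m) ℝ}
    (hf : ∀ k, Mle 0 (f k)) (h : ∀ k, Mle (f k) (g k)) (hg : Summable g) : Summable f :=
  Pi.summable.mpr fun i => Pi.summable.mpr fun j =>
    Summable.of_nonneg_of_le (fun k => hf k i j) (fun k => h k i j)
      (Pi.summable.mp (Pi.summable.mp hg i) j)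

lemma tsum_add_nat_eq_of_eq_zero {α : Type*} [AddCommMonoid α] [TopologicalSpace α]
    (f : ℕ → α) (ℓ : ℕ) (hf : ∀ n < ℓ, f n = 0) : ∑' i, f (i + ℓ) = ∑' n, f n :=
  (add_left_injective ℓ).tsum_eq fun n hn =>
    ⟨n - ℓ, Nat.sub_add_cancel (not_lt.mp fun h => hn (hf n h))⟩

lemma hasSum_vmat {A : ℕ → Matrix (Fin m) (Fin m) ℝ} {G : Matrix (Fin m) (Fin m) ℝ}
    (hA : ∀ i, Mle 0 (A i)) (hG : Mle 0 G)
    (hsAstar : ∀ j, Summable (fun k => A (j + k + 1) * G ^ k))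
    (hsV : Summable (fun j => ∑' k, A (j + k + 1) * G ^ k)) :
    HasSum (fun n => A n * ∑ j ∈ range n, G ^ j) (Vmat A G) := by
  set f : ℕ × ℕ → Matrix (Fin m) (Fin m) ℝ := fun q => A (q.1 + q.2 + 1) * G ^ q.2
  have hf : Summable f := Pi.summable.mpr fun i => Pi.summable.mpr fun j =>
    (summable_prod_of_nonneg fun q => (hA _).mul_nonneg (hG.pow_nonneg _) i j).mpr
      ⟨fun a => Pi.summable.mp (Pi.summable.mp (hsAstar a) i) j, by
        simpa only [Matrix.tsum_apply_apply (hsAstar _)] using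
          Pi.summable.mp (Pi.summable.mp hsV i) j⟩
  have hV : HasSum f (Vmat A G) := by
    rw [Vmat, ← hf.tsum_prod]
    exact hf.hasSum
  -- group the terms `A_{j+k} G^k` along the antidiagonals `j + k = n`
  have hdiag : HasSum (fun n => A (n + 1) * ∑ j ∈ range (n + 1), G ^ j) (Vmat A G) := by
    convert (HasAntidiagonal.sigmaAntidiagonalEquivProd.hasSum_iff.mpr hV).sigma
      fun n => hasSum_fintype _ using 2 with n
    simp only [Function.comp_apply, HasAntidiagonal.sigmaAntidiagonalEquivProd_apply]
    rw [sum_coe_sort _ f]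
    have hgeom : ∑ q ∈ antidiagonal n, G ^ q.2 = ∑ j ∈ range (n + 1), G ^ j :=
      (Nat.sum_antidiagonal_swap (f := fun q => G ^ q.1)).trans
        (Nat.sum_antidiagonal_eq_sum_range_succ_mk _ n)
    rw [← hgeom, mul_sum]
    refine sum_congr rfl fun q hq => ?_
    simp only [f, HasAntidiagonal.mem_antidiagonal.mp hq]
  exact (hasSum_nat_add_iff' 1).mp (by simpa using hdiag)

lemma tsum_pow_mul_geom_add_tsum_succ (b : ℕ → Matrix (Fin m) (Fin m) ℝ)
    (G : Matrix (Fin m) (Fin m) ℝ) (ℓ : ℕ) (hsG : Summable fun i => b i * G ^ i)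
    (hsN : Summable fun i => b (i + 1) * ∑ j ∈ range (i + 1), G ^ j) :
    (∑' i, b i * G ^ i) * ∑ j ∈ range ℓ, G ^ j + ∑' i, b (i + 1) * ∑ j ∈ range (i + 1), G ^ j
      = ∑' i, b i * ∑ j ∈ range (i + ℓ), G ^ j := by
  have hsN' : Summable fun i => b i * ∑ j ∈ range i, G ^ j := (summable_nat_add_iff 1).mp hsN
  have hN : ∑' i, b (i + 1) * ∑ j ∈ range (i + 1), G ^ j = ∑' i, b i * ∑ j ∈ range i, G ^ j := by
    simp [hsN'.tsum_eq_zero_add]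
  rw [← hsG.tsum_mul_right, hN, ← (hsG.mul_right _).tsum_add hsN']
  refine tsum_congr fun i => ?_
  rw [sum_range_add, mul_add, add_comm, mul_assoc]
  simp_rw [pow_add, ← mul_sum]

lemma fmat_add_nmat_eq_vmat {p : ℕ} {A : ℕ → Matrix (Fin m) (Fin m) ℝ}
    {B : ℕ → ℕ → Matrix (Fin m) (Fin m) ℝ} {G : Matrix (Fin m) (Fin m) ℝ}
    (hA : ∀ i, Mle 0 (A i)) (hB : ∀ ℓ i, Mle 0 (B ℓ i)) (hG : Mle 0 G)
    (hcompat : ∀ i, A i = ∑ ℓ ∈ range (p + 1), if ℓ ≤ i then B ℓ (i - ℓ) else 0)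
    (hsG : ∀ ℓ, Summable (fun i => B ℓ i * G ^ i))
    (hsN : ∀ ℓ, Summable (fun i => B ℓ (i + 1) * ∑ j ∈ range (i + 1), G ^ j))
    (hsAstar : ∀ j, Summable (fun k => A (j + k + 1) * G ^ k))
    (hsV : Summable (fun j => ∑' k, A (j + k + 1) * G ^ k)) :
    Fmat p B G + Nmat p B G = Vmat A G := by
  have hV := hasSum_vmat hA hG hsAstar hsV
  -- the part of `A_{n-1} ∑_{j<n} G^j` coming from the `ℓ`-th family
  set u : ℕ → ℕ → Matrix (Fin m) (Fin m) ℝ :=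
    fun ℓ n => (if ℓ ≤ n then B ℓ (n - ℓ) else 0) * ∑ j ∈ range n, G ^ j
  have hgeom : ∀ n, Mle 0 (∑ j ∈ range n, G ^ j) := fun n =>
    Mle.sum_nonneg fun j _ => hG.pow_nonneg j
  have hu : ∀ ℓ n, Mle 0 (u ℓ n) := fun ℓ n => by
    refine Mle.mul_nonneg ?_ (hgeom n)
    split_ifs
    exacts [hB _ _, fun _ _ => le_rfl]
  have hAu : ∀ n, A n * ∑ j ∈ range n, G ^ j = ∑ ℓ ∈ range (p + 1), u ℓ n := fun n => by
    rw [hcompat n, sum_mul]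
  have hu_summable : ∀ ℓ ∈ range (p + 1), Summable (u ℓ) := fun ℓ hℓ =>
    Matrix.summable_of_nonneg_of_le (hu ℓ) (fun n i j => by
      rw [hAu n, Matrix.sum_apply]
      exact single_le_sum (fun ℓ' _ => hu ℓ' n i j) hℓ) hV.summable
  have hu_tsum : ∀ ℓ, ∑' n, u ℓ n = ∑' i, B ℓ i * ∑ j ∈ range (i + ℓ), G ^ j := fun ℓ => by
    rw [← tsum_add_nat_eq_of_eq_zero (u ℓ) ℓ fun n hn => by simp [u, not_le.mpr hn]]
    exact tsum_congr fun i => by simp [u]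
  calc Fmat p B G + Nmat p B G
      = ∑ ℓ ∈ range (p + 1), ∑' i, B ℓ i * ∑ j ∈ range (i + ℓ), G ^ j := by
        rw [Fmat, Nmat, ← sum_add_distrib]
        exact sum_congr rfl fun ℓ _ => tsum_pow_mul_geom_add_tsum_succ _ G ℓ (hsG ℓ) (hsN ℓ)
    _ = ∑' n, ∑ ℓ ∈ range (p + 1), u ℓ n := by
        rw [Summable.tsum_finsetSum hu_summable]
        exact sum_congr rfl fun ℓ _ => (hu_tsum ℓ).symm
    _ = Vmat A G := by
        simp_rw [← hAu]
        exact hV.tsum_eq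

lemma fmat_nonneg {p : ℕ} {B : ℕ → ℕ → Matrix (Fin m) (Fin m) ℝ} {G : Matrix (Fin m) (Fin m) ℝ}
    (hB : ∀ ℓ i, Mle 0 (B ℓ i)) (hG : Mle 0 G) : Mle 0 (Fmat p B G) :=
  Mle.sum_nonneg fun ℓ _ =>
    (Mle.tsum_nonneg fun i => (hB ℓ i).mul_nonneg (hG.pow_nonneg i)).mul_nonneg
      (Mle.sum_nonneg fun j _ => hG.pow_nonneg j)

lemma nmat_nonneg {p : ℕ} {B : ℕ → ℕ → Matrix (Fin m) (Fin m) ℝ} {G : Matrix (Fin m) (Fin m) ℝ}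
    (hB : ∀ ℓ i, Mle 0 (B ℓ i)) (hG : Mle 0 G) : Mle 0 (Nmat p B G) :=
  Mle.sum_nonneg fun ℓ _ => Mle.tsum_nonneg fun i =>
    (hB ℓ (i + 1)).mul_nonneg (Mle.sum_nonneg fun j _ => hG.pow_nonneg j)

end Embedding

/-- Here `A i` denotes `A_{i-1}`, `p_h = q_h + 1 ≥ 0`, and `Aℓh ℓ' i` denotes
`A^{(h)}_{ℓ'-1, i}`. -/
theorem stmt7_general (m : ℕ) (p₁ p₂ : ℕ)
    (A : ℕ → Matrix (Fin m) (Fin m) ℝ)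
    (Aℓ₁ Aℓ₂ : ℕ → ℕ → Matrix (Fin m) (Fin m) ℝ)
    (hA0 : ∀ i, Mle 0 (A i))
    (hAℓ₁0 : ∀ ℓ i, Mle 0 (Aℓ₁ ℓ i)) (hAℓ₂0 : ∀ ℓ i, Mle 0 (Aℓ₂ ℓ i))
    (hcompat₁ : ∀ i, A i = ∑ ℓ ∈ Finset.range (p₁ + 1),
      if ℓ ≤ i then Aℓ₁ ℓ (i - ℓ) else 0)
    (hcompat₂ : ∀ i, A i = ∑ ℓ ∈ Finset.range (p₂ + 1),
      if ℓ ≤ i then Aℓ₂ ℓ (i - ℓ) else 0)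
    (G : Matrix (Fin m) (Fin m) ℝ) (hG : IsMinSol A G)
    -- all series occurring converge entrywise:
    (hsG₁ : ∀ ℓ, Summable (fun i => Aℓ₁ ℓ i * G ^ i))
    (hsG₂ : ∀ ℓ, Summable (fun i => Aℓ₂ ℓ i * G ^ i))
    (hsN₁ : ∀ ℓ, Summable (fun i => Aℓ₁ ℓ (i + 1) * ∑ j ∈ Finset.range (i + 1), G ^ j))
    (hsN₂ : ∀ ℓ, Summable (fun i => Aℓ₂ ℓ (i + 1) * ∑ j ∈ Finset.range (i + 1), G ^ j))
    (hsAstar : ∀ j, Summable (fun k => A (j + k + 1) * G ^ k))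
    (hsV : Summable (fun j => ∑' k, A (j + k + 1) * G ^ k))
    (hρ : specRad (Vmat A G) < 1)
    -- `F⁽¹⁾ ≥ F⁽²⁾` entrywise:
    (hF : Mle (Fmat p₂ Aℓ₂ G) (Fmat p₁ Aℓ₁ G)) :
    IsUnit ((1 : Matrix (Fin m) (Fin m) ℝ) - Fmat p₁ Aℓ₁ G) ∧
    IsUnit ((1 : Matrix (Fin m) (Fin m) ℝ) - Fmat p₂ Aℓ₂ G) ∧
    specRad ((1 - Fmat p₁ Aℓ₁ G)⁻¹ * Nmat p₁ Aℓ₁ G) ≤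
      specRad ((1 - Fmat p₂ Aℓ₂ G)⁻¹ * Nmat p₂ Aℓ₂ G) :=
  specRad_inv_mul_le_of_splitting (fmat_nonneg hAℓ₁0 hG.1) (nmat_nonneg hAℓ₁0 hG.1)
    (fmat_nonneg hAℓ₂0 hG.1) (nmat_nonneg hAℓ₂0 hG.1)
    (fmat_add_nmat_eq_vmat hA0 hAℓ₁0 hG.1 hcompat₁ hsG₁ hsN₁ hsAstar hsV)
    (fmat_add_nmat_eq_vmat hA0 hAℓ₂0 hG.1 hcompat₂ hsG₂ hsN₂ hsAstar hsV) hF hρ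

/-- Theorem 3.5: comparison of two embeddings.  Here `A i` denotes
`A_{i-1}`, `p_h = q_h + 1 ≥ 0`, and `Aℓh ℓ' i` denotes `A^{(h)}_{ℓ'-1, i}`. -/
theorem stmt7 (m : ℕ) (hm : 1 ≤ m) (p₁ p₂ : ℕ)
    (A : ℕ → Matrix (Fin m) (Fin m) ℝ)
    (Aℓ₁ Aℓ₂ : ℕ → ℕ → Matrix (Fin m) (Fin m) ℝ)
    (hA0 : ∀ i, Mle 0 (A i))
    (hAℓ₁0 : ∀ ℓ i, Mle 0 (Aℓ₁ ℓ i)) (hAℓ₂0 : ∀ ℓ i, Mle 0 (Aℓ₂ ℓ i))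
    (hsum : Summable A)
    (hrow : ∀ k, ∑ j, (∑' i, A i) k j ≤ 1)
    (hcompat₁ : ∀ i, A i = ∑ ℓ ∈ Finset.range (p₁ + 1),
      if ℓ ≤ i then Aℓ₁ ℓ (i - ℓ) else 0)
    (hcompat₂ : ∀ i, A i = ∑ ℓ ∈ Finset.range (p₂ + 1),
      if ℓ ≤ i then Aℓ₂ ℓ (i - ℓ) else 0)
    (G : Matrix (Fin m) (Fin m) ℝ) (hG : IsMinSol A G)
    -- all series occurring converge entrywise:
    (hsG₁ : ∀ ℓ, Summable (fun i => Aℓ₁ ℓ i * G ^ i))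
    (hsG₂ : ∀ ℓ, Summable (fun i => Aℓ₂ ℓ i * G ^ i))
    (hsN₁ : ∀ ℓ, Summable (fun i => Aℓ₁ ℓ (i + 1) * ∑ j ∈ Finset.range (i + 1), G ^ j))
    (hsN₂ : ∀ ℓ, Summable (fun i => Aℓ₂ ℓ (i + 1) * ∑ j ∈ Finset.range (i + 1), G ^ j))
    (hsAstar : ∀ j, Summable (fun k => A (j + k + 1) * G ^ k))
    (hsV : Summable (fun j => ∑' k, A (j + k + 1) * G ^ k))
    (hρ : specRad (Vmat A G) < 1)
    -- `F⁽¹⁾ ≥ F⁽²⁾` entrywise: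
    (hF : Mle (Fmat p₂ Aℓ₂ G) (Fmat p₁ Aℓ₁ G)) :
    IsUnit ((1 : Matrix (Fin m) (Fin m) ℝ) - Fmat p₁ Aℓ₁ G) ∧
    IsUnit ((1 : Matrix (Fin m) (Fin m) ℝ) - Fmat p₂ Aℓ₂ G) ∧
    specRad ((1 - Fmat p₁ Aℓ₁ G)⁻¹ * Nmat p₁ Aℓ₁ G) ≤
      specRad ((1 - Fmat p₂ Aℓ₂ G)⁻¹ * Nmat p₂ Aℓ₂ G) :=
  stmt7_general m p₁ p₂ A Aℓ₁ Aℓ₂ hA0 hAℓ₁0 hAℓ₂0 hcompat₁ hcompat₂ G hG hsG₁ hsG₂ hsN₁ hsN₂ hsAstar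
    hsV hρ hF
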